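/- Let k ≥ 1 be an integer, a_1 < … < a_k distinct real numbers, and ε_1, …, ε_k positive reals with ε_1 + … + ε_k = 1. For s > 0 consider the branch-point equation ∑_{j=1}^k ε_j/(z − s·a_j)² = 1, whose solutions are the 2k roots (with multiplicity) of the monic polynomial Q_s(ξ) := ∏_{i=1}^k (ξ − s·a_i)² − ∑_{i=1}^k ε_i ∏_{j≠i} (ξ − s·a_j)². Then there exists s_1 > 0 such that for every s with 0 < s < s_1 the equation has exactly two real solutions; as s → 0⁺ these two real solutions converge to −1 and +1 respectively, while the remaining 2k − 2 roots of Q_s are nonreal (forming complex-conjugate pairs) and converge to 0. -/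

import Mathlib

/-!
Put `bⱼ = s·aⱼ ∈ [-B, B]` with `B = s·max |aᵢ|` and `f(x) = ∑ εⱼ/(x - bⱼ)²`. Then
`Q_s = ∏ (ξ - bᵢ)² · (1 - f)`, and `Q_s` does not vanish at the (distinct) poles `bⱼ`.

On the real line `f > 1` on `[-B, B]` as soon as `2B < 1`, while right of `B` it is strictly
decreasing and squeezed between `1/(x + B)²` and `1/(x - B)²`; so `f = 1` has exactly one solution
there, in `[1 - B, 1 + B]`, and by the symmetry `x ↦ -x` exactly one left of `-B`.

For a nonreal solution `w = u + iv` the imaginary part of `f(w) = 1` reads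
`∑ εⱼ (u - bⱼ)/|w - bⱼ|⁴ = 0`, so `u` lies between two poles, and the real part
`∑ εⱼ ((u - bⱼ)² - v²)/|w - bⱼ|⁴ = 1` forces `|v| < |u - bⱼ| ≤ 2B` for some `j`; hence `|w| < 3B`.
-/

open Filter Polynomial Set Complex Topology

section BranchPoly

variable {ι K L : Type*} [Fintype ι] [DecidableEq ι] [Field K] [Field L]

noncomputable def branchPoly (ε b : ι → K) : K[X] :=
  ∏ i, (X - C (b i)) ^ 2 - ∑ i, C (ε i) * ∏ j ∈ Finset.univ.erase i, (X - C (b j)) ^ 2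

theorem branchPoly_map (f : K →+* L) (ε b : ι → K) :
    (branchPoly ε b).map f = branchPoly (f ∘ ε) (f ∘ b) := by
  simp [branchPoly, Polynomial.map_prod, Polynomial.map_sum]

theorem eval_branchPoly (ε b : ι → K) (w : K) :
    (branchPoly ε b).eval w =
      ∏ i, (w - b i) ^ 2 - ∑ i, ε i * ∏ j ∈ Finset.univ.erase i, (w - b j) ^ 2 := by
  simp [branchPoly, eval_prod, eval_finsetSum]

theorem eval_branchPoly_of_ne (ε b : ι → K) {w : K} (hw : ∀ j, w ≠ b j) :
    (branchPoly ε b).eval w = (∏ i, (w - b i) ^ 2) * (1 - ∑ i, ε i / (w - b i) ^ 2) := by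
  have hne : ∀ i, (w - b i) ^ 2 ≠ 0 := fun i => pow_ne_zero _ (sub_ne_zero.mpr (hw i))
  rw [eval_branchPoly, mul_sub, mul_one, Finset.mul_sum]
  congr 1
  refine Finset.sum_congr rfl fun i _ => ?_
  rw [← Finset.mul_prod_erase _ _ (Finset.mem_univ i), mul_div_assoc', mul_comm (ε i), mul_assoc,
    mul_div_cancel_left₀ _ (hne i)]

theorem eval_branchPoly_eq_zero_iff_of_ne (ε b : ι → K) {w : K} (hw : ∀ j, w ≠ b j) :
    (branchPoly ε b).eval w = 0 ↔ ∑ j, ε j / (w - b j) ^ 2 = 1 := by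
  have hprod : ∏ i, (w - b i) ^ 2 ≠ 0 :=
    Finset.prod_ne_zero_iff.mpr fun i _ => pow_ne_zero _ (sub_ne_zero.mpr (hw i))
  rw [eval_branchPoly_of_ne ε b hw, mul_eq_zero, sub_eq_zero, eq_comm (a := (1 : K))]
  simp [hprod]

theorem eval_branchPoly_self (ε b : ι → K) (j : ι) :
    (branchPoly ε b).eval (b j) = -(ε j * ∏ l ∈ Finset.univ.erase j, (b j - b l) ^ 2) := by
  rw [eval_branchPoly, Finset.prod_eq_zero (Finset.mem_univ j) (by simp), zero_sub,
    Finset.sum_eq_single j]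
  · intro i _ hij
    rw [Finset.prod_eq_zero (Finset.mem_erase.mpr ⟨Ne.symm hij, Finset.mem_univ j⟩) (by simp),
      mul_zero]
  · simp

theorem eval_branchPoly_eq_zero_iff {ε b : ι → K} (hε : ∀ j, ε j ≠ 0)
    (hb : Function.Injective b) {w : K} :
    (branchPoly ε b).eval w = 0 ↔ (∀ j, w ≠ b j) ∧ ∑ j, ε j / (w - b j) ^ 2 = 1 := by
  by_cases hw : ∀ j, w ≠ b j
  · simp [eval_branchPoly_eq_zero_iff_of_ne ε b hw, hw]
  · push Not at hw
    obtain ⟨j, rfl⟩ := hw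
    have hprod : ∏ l ∈ Finset.univ.erase j, (b j - b l) ^ 2 ≠ 0 :=
      Finset.prod_ne_zero_iff.mpr fun l hl =>
        pow_ne_zero _ (sub_ne_zero.mpr (hb.ne (Finset.ne_of_mem_erase hl).symm))
    simp [eval_branchPoly_self, hε j, hprod]

end BranchPoly

section RealSolutions

variable {ι : Type*} [Fintype ι] {ε b : ι → ℝ} {B x : ℝ}

noncomputable def branchSum (ε b : ι → ℝ) (x : ℝ) : ℝ := ∑ j, ε j / (x - b j) ^ 2

theorem branchSum_neg (ε b : ι → ℝ) (x : ℝ) : branchSum ε (-b) (-x) = branchSum ε b x := by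
  simp only [branchSum, Pi.neg_apply, sub_neg_eq_add, neg_add_eq_sub, ← neg_sub (b _), neg_sq]

theorem one_lt_branchSum (hε : ∀ j, 0 < ε j) (hsum : ∑ j, ε j = 1) (hb : ∀ j, |b j| ≤ B)
    (hB : 2 * B < 1) (hx : |x| ≤ B) (hxb : ∀ j, x ≠ b j) : 1 < branchSum ε b x := by
  have hne : (Finset.univ : Finset ι).Nonempty :=
    Finset.nonempty_of_sum_ne_zero (f := ε) (by simp [hsum])
  rw [← hsum]
  refine Finset.sum_lt_sum_of_nonempty hne fun j _ => ?_
  have hpos : 0 < (x - b j) ^ 2 := by positivity [sub_ne_zero.mpr (hxb j)]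
  have hlt : (x - b j) ^ 2 < 1 := by
    rw [← sq_abs, sq_lt_one_iff₀ (abs_nonneg _)]
    linarith [abs_sub x (b j), hb j]
  rw [lt_div_iff₀ hpos]
  nlinarith [hε j]

theorem inv_sq_add_le_branchSum (hε : ∀ j, 0 ≤ ε j) (hsum : ∑ j, ε j = 1)
    (hb : ∀ j, |b j| ≤ B) (hx : B < x) : 1 / (x + B) ^ 2 ≤ branchSum ε b x := by
  rw [← hsum, Finset.sum_div]
  refine Finset.sum_le_sum fun j _ => div_le_div_of_nonneg_left (hε j) ?_ ?_
  · nlinarith [abs_le.mp (hb j)]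
  · nlinarith [abs_le.mp (hb j)]

theorem branchSum_le_inv_sq_sub (hε : ∀ j, 0 ≤ ε j) (hsum : ∑ j, ε j = 1)
    (hb : ∀ j, b j ≤ B) (hx : B < x) : branchSum ε b x ≤ 1 / (x - B) ^ 2 := by
  rw [← hsum, Finset.sum_div]
  refine Finset.sum_le_sum fun j _ => div_le_div_of_nonneg_left (hε j) ?_ ?_
  · nlinarith
  · nlinarith [hb j]

theorem strictAntiOn_branchSum (hε : ∀ j, 0 < ε j) [Nonempty ι] (hb : ∀ j, b j ≤ B) :
    StrictAntiOn (branchSum ε b) (Ioi B) := by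
  intro x hx y hy hxy
  refine Finset.sum_lt_sum_of_nonempty Finset.univ_nonempty fun j _ => ?_
  have hxj : 0 < x - b j := by linarith [hb j, mem_Ioi.mp hx]
  exact div_lt_div_of_pos_left (hε j) (by positivity) (by nlinarith)

theorem continuousOn_branchSum (hb : ∀ j, b j ≤ B) : ContinuousOn (branchSum ε b) (Ioi B) := by
  refine continuousOn_finsetSum _ fun j _ => continuousOn_const.div (by fun_prop) ?_
  intro x hx
  have : 0 < x - b j := by linarith [hb j, mem_Ioi.mp hx]
  positivity

theorem exists_branchSum_eq_one_iff_of_gt (hε : ∀ j, 0 < ε j) (hsum : ∑ j, ε j = 1)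
    (hb : ∀ j, |b j| ≤ B) (hB : 2 * B < 1) :
    ∃ r, |r - 1| ≤ B ∧ ∀ x, B < x → (branchSum ε b x = 1 ↔ x = r) := by
  have : Nonempty ι := by
    by_contra h
    simp [not_nonempty_iff.mp h] at hsum
  have hbu : ∀ j, b j ≤ B := fun j => (abs_le.mp (hb j)).2
  have hB0 : 0 ≤ B := (abs_nonneg _).trans (hb (Classical.arbitrary ι))
  have hIcc : Icc (1 - B) (1 + B) ⊆ Ioi B := fun x hx => by simp only [mem_Ioi]; linarith [hx.1]
  have hlo : 1 ≤ branchSum ε b (1 - B) := by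
    simpa using inv_sq_add_le_branchSum (fun j => (hε j).le) hsum hb (x := 1 - B) (by linarith)
  have hhi : branchSum ε b (1 + B) ≤ 1 := by
    simpa using branchSum_le_inv_sq_sub (fun j => (hε j).le) hsum hbu (x := 1 + B) (by linarith)
  obtain ⟨r, hr, hr1⟩ := intermediate_value_Icc' (by linarith)
    ((continuousOn_branchSum hbu).mono hIcc) ⟨hhi, hlo⟩
  refine ⟨r, abs_le.mpr ⟨by linarith [hr.1], by linarith [hr.2]⟩, fun x hx => ?_⟩
  rw [← hr1]
  exact (strictAntiOn_branchSum hε hbu).injOn.eq_iff hx (hIcc hr)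

theorem branchSum_eq_one_set_eq_pair (hε : ∀ j, 0 < ε j) (hsum : ∑ j, ε j = 1)
    (hb : ∀ j, |b j| ≤ B) (hB : 2 * B < 1) :
    ∃ r₁ r₂, r₁ < r₂ ∧ |r₁ + 1| ≤ B ∧ |r₂ - 1| ≤ B ∧
      {x | (∀ j, x ≠ b j) ∧ branchSum ε b x = 1} = {r₁, r₂} := by
  have hnb : ∀ j, |(-b) j| ≤ B := fun j => by simpa using hb j
  obtain ⟨r₂, hr₂, hr₂u⟩ := exists_branchSum_eq_one_iff_of_gt hε hsum hb hB
  obtain ⟨r₁', hr₁', hr₁u⟩ := exists_branchSum_eq_one_iff_of_gt hε hsum hnb hB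
  have hr₁ : ∀ x, x < -B → (branchSum ε b x = 1 ↔ x = -r₁') := fun x hx => by
    rw [← branchSum_neg, hr₁u (-x) (by linarith), neg_eq_iff_eq_neg]
  have hr₂B : B < r₂ := by linarith [(abs_le.mp hr₂).1]
  have hr₁B : -r₁' < -B := by linarith [(abs_le.mp hr₁').1]
  refine ⟨-r₁', r₂, by linarith [(abs_le.mp hr₁').1, (abs_le.mp hr₂).1],
    by rw [← abs_neg]; convert hr₁' using 2; ring, hr₂, ?_⟩
  ext x
  simp only [mem_ofPred_eq, mem_insert_iff, mem_singleton_iff]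
  constructor
  · rintro ⟨hxb, hx⟩
    rcases lt_or_ge x (-B) with hlt | hge
    · exact Or.inl ((hr₁ x hlt).mp hx)
    rcases lt_or_ge B x with hgt | hle
    · exact Or.inr ((hr₂u x hgt).mp hx)
    exact absurd hx (one_lt_branchSum hε hsum hb hB (abs_le.mpr ⟨hge, hle⟩) hxb).ne'
  · rintro (hx | hx) <;> rw [hx]
    · exact ⟨fun j => (by linarith [(abs_le.mp (hb j)).1] : -r₁' < b j).ne, (hr₁ _ hr₁B).mpr rfl⟩
    · exact ⟨fun j => (by linarith [(abs_le.mp (hb j)).2] : b j < r₂).ne', (hr₂u _ hr₂B).mpr rfl⟩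

theorem abs_mul_le_mul_of_abs_le {a s M : ℝ} (hs : 0 ≤ s) (ha : |a| ≤ M) : |s * a| ≤ s * M := by
  rw [abs_mul, abs_of_nonneg hs]
  exact mul_le_mul_of_nonneg_left ha hs

theorem exists_branchSum_mul_eq_one_set_eq_pair (hε : ∀ j, 0 < ε j) (hsum : ∑ j, ε j = 1)
    {a : ι → ℝ} {M : ℝ} (hM : 0 < M) (ha : ∀ j, |a j| ≤ M) :
    ∃ r₁ r₂ : ℝ → ℝ, ∀ s, 0 < s → s < 1 / (2 * M) →
      r₁ s < r₂ s ∧ |r₁ s + 1| ≤ s * M ∧ |r₂ s - 1| ≤ s * M ∧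
        {x | (∀ j, x ≠ s * a j) ∧ branchSum ε (fun j => s * a j) x = 1} = {r₁ s, r₂ s} := by
  have (s : ℝ) : ∃ r₁ r₂ : ℝ, 0 < s → s < 1 / (2 * M) → r₁ < r₂ ∧ |r₁ + 1| ≤ s * M ∧
      |r₂ - 1| ≤ s * M ∧
        {x | (∀ j, x ≠ s * a j) ∧ branchSum ε (fun j => s * a j) x = 1} = {r₁, r₂} := by
    by_cases hs : 0 < s ∧ s < 1 / (2 * M)
    · have hsM : 2 * (s * M) < 1 := by rw [lt_div_iff₀ (by positivity)] at hs; linarith [hs.2]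
      obtain ⟨r₁, r₂, hr⟩ :=
        branchSum_eq_one_set_eq_pair hε hsum (fun j => abs_mul_le_mul_of_abs_le hs.1.le (ha j)) hsM
      exact ⟨r₁, r₂, fun _ _ => hr⟩
    · exact ⟨0, 0, fun h₀ h₁ => (hs ⟨h₀, h₁⟩).elim⟩
  choose r₁ r₂ hr using this
  exact ⟨r₁, r₂, hr⟩

end RealSolutions

section NonrealSolutions

variable {ι : Type*} [Fintype ι] {ε b : ι → ℝ} {B : ℝ} {w : ℂ}

theorem re_sum_div_sq (ε b : ι → ℝ) (w : ℂ) :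
    (∑ j, (ε j : ℂ) / (w - b j) ^ 2).re =
      ∑ j, ε j / normSq (w - b j) ^ 2 * ((w.re - b j) ^ 2 - w.im ^ 2) := by
  simp only [re_sum, div_re, map_pow]
  simp only [pow_two, mul_re, mul_im, sub_re, sub_im, ofReal_re, ofReal_im]
  refine Finset.sum_congr rfl fun j _ => ?_
  ring

theorem im_sum_div_sq (ε b : ι → ℝ) (w : ℂ) :
    (∑ j, (ε j : ℂ) / (w - b j) ^ 2).im =
      -2 * w.im * ∑ j, ε j / normSq (w - b j) ^ 2 * (w.re - b j) := by
  simp only [im_sum, div_im, map_pow, Finset.mul_sum]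
  simp only [pow_two, mul_re, mul_im, sub_re, sub_im, ofReal_re, ofReal_im]
  refine Finset.sum_congr rfl fun j _ => ?_
  ring

theorem abs_re_le_of_sum_div_sq_eq_one (hε : ∀ j, 0 < ε j) (hb : ∀ j, |b j| ≤ B)
    (hw : w.im ≠ 0) (h : ∑ j, (ε j : ℂ) / (w - b j) ^ 2 = 1) : |w.re| ≤ B := by
  have hne : (Finset.univ : Finset ι).Nonempty :=
    Finset.nonempty_of_sum_ne_zero (by rw [h]; exact one_ne_zero)
  have hweight : ∀ j, 0 < ε j / normSq (w - b j) ^ 2 := fun j =>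
    div_pos (hε j) (pow_pos (normSq_pos.mpr fun h0 => hw (by simpa using congrArg im h0)) 2)
  have hbal : ∑ j, ε j / normSq (w - b j) ^ 2 * (w.re - b j) = 0 := by
    have := congrArg im h
    rw [im_sum_div_sq, one_im, mul_eq_zero] at this
    exact this.resolve_left (by simpa using hw)
  set g := fun j => ε j / normSq (w - b j) ^ 2 * (w.re - b j)
  obtain ⟨i, -, hi⟩ := Finset.exists_le_of_sum_le hne (f := 0) (g := g) (by simp [g, hbal])
  obtain ⟨j, -, hj⟩ := Finset.exists_le_of_sum_le hne (f := g) (g := 0) (by simp [g, hbal])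
  have hi' : 0 ≤ w.re - b i := nonneg_of_mul_nonneg_right hi (hweight i)
  have hj' : w.re - b j ≤ 0 := nonpos_of_mul_nonpos_right hj (hweight j)
  exact abs_le.mpr ⟨by linarith [abs_le.mp (hb i)], by linarith [abs_le.mp (hb j)]⟩

theorem exists_abs_im_lt_of_sum_div_sq_eq_one (hε : ∀ j, 0 ≤ ε j)
    (h : ∑ j, (ε j : ℂ) / (w - b j) ^ 2 = 1) : ∃ j, |w.im| < |w.re - b j| := by
  have hre := congrArg re h
  rw [re_sum_div_sq, one_re] at hre
  obtain ⟨j, -, hj⟩ := Finset.exists_lt_of_sum_lt (f := 0) (s := Finset.univ)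
    (g := fun j => ε j / normSq (w - b j) ^ 2 * ((w.re - b j) ^ 2 - w.im ^ 2))
    (by simp [hre])
  have := pos_of_mul_pos_right hj (div_nonneg (hε j) (by positivity))
  exact ⟨j, sq_lt_sq.mp (by linarith)⟩

theorem norm_lt_of_sum_div_sq_eq_one (hε : ∀ j, 0 < ε j) (hb : ∀ j, |b j| ≤ B)
    (hw : w.im ≠ 0) (h : ∑ j, (ε j : ℂ) / (w - b j) ^ 2 = 1) : ‖w‖ < 3 * B := by
  have hre := abs_re_le_of_sum_div_sq_eq_one hε hb hw h
  obtain ⟨j, hj⟩ := exists_abs_im_lt_of_sum_div_sq_eq_one (fun j => (hε j).le) h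
  calc ‖w‖ ≤ |w.re| + |w.im| := norm_le_abs_re_add_abs_im w
    _ < B + (B + B) := by linarith [abs_sub w.re (b j), hb j]
    _ = 3 * B := by ring

end NonrealSolutions

section ComplexRoots

variable {ι : Type*} [Fintype ι] [DecidableEq ι] {ε b : ι → ℝ} {B : ℝ} {w : ℂ}

theorem aeval_branchPoly (ε b : ι → ℝ) (w : ℂ) :
    aeval w (branchPoly ε b) = (branchPoly (fun j => (ε j : ℂ)) (fun j => (b j : ℂ))).eval w := by
  rw [← eval_map_algebraMap, branchPoly_map]
  rfl

theorem re_mem_of_aeval_branchPoly_eq_zero (hε : ∀ j, ε j ≠ 0) (hb : Function.Injective b)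
    (hw : aeval w (branchPoly ε b) = 0) (him : w.im = 0) :
    w.re ∈ {x | (∀ j, x ≠ b j) ∧ branchSum ε b x = 1} := by
  rw [← Complex.re_add_im w, him, ofReal_zero, zero_mul, add_zero, ← Complex.coe_algebraMap,
    aeval_algebraMap_apply_eq_algebraMap_eval, map_eq_zero,
    eval_branchPoly_eq_zero_iff hε hb] at hw
  exact hw

theorem norm_lt_of_aeval_branchPoly_eq_zero (hε : ∀ j, 0 < ε j) (hb : ∀ j, |b j| ≤ B)
    (hw : aeval w (branchPoly ε b) = 0) (him : w.im ≠ 0) : ‖w‖ < 3 * B := by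
  have hne : ∀ j, w ≠ b j := fun j h => him (by simp [h])
  rw [aeval_branchPoly, eval_branchPoly_eq_zero_iff_of_ne _ _ hne] at hw
  exact norm_lt_of_sum_div_sq_eq_one hε hb him hw

end ComplexRoots

theorem tendsto_nhdsGT_of_abs_sub_le {r : ℝ → ℝ} {c M s₁ : ℝ} (hs₁ : 0 < s₁)
    (h : ∀ s, 0 < s → s < s₁ → |r s - c| ≤ s * M) : Tendsto r (𝓝[>] 0) (𝓝 c) := by
  rw [tendsto_iff_norm_sub_tendsto_zero]
  refine squeeze_zero' (Eventually.of_forall fun s => norm_nonneg _) ?_ (g := fun s => s * M) ?_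
  · filter_upwards [Ioo_mem_nhdsGT hs₁] with s hs using h s hs.1 hs.2
  · exact tendsto_nhdsWithin_of_tendsto_nhds (by simpa using (continuous_mul_const M).tendsto 0)

theorem stmt_8_general (k : ℕ) (a ε : Fin k → ℝ)
    (ha : StrictMono a) (hε : ∀ i, 0 < ε i) (hsum : ∑ i, ε i = 1)
    (Qs : ℝ → Polynomial ℂ)
    (hQs : ∀ s : ℝ, Qs s = ∏ i, (X - C ((s : ℂ) * (a i : ℂ))) ^ 2
        - ∑ i, C ((ε i : ℂ)) *
            ∏ j ∈ Finset.univ.erase i, (X - C ((s : ℂ) * (a j : ℂ))) ^ 2) :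
    ∃ s₁ > (0 : ℝ), ∃ r₁ r₂ : ℝ → ℝ,
      (∀ s : ℝ, 0 < s → s < s₁ →
        r₁ s < r₂ s ∧
        ({x : ℝ | (∀ j, x ≠ s * a j) ∧ ∑ j, ε j / (x - s * a j) ^ 2 = 1}
          = {r₁ s, r₂ s}) ∧
        (∀ w : ℂ, (Qs s).eval w = 0 → w.im = 0 → (w = (r₁ s : ℂ) ∨ w = (r₂ s : ℂ))) ∧
        (∀ w : ℂ, (Qs s).eval w = 0 → w.im ≠ 0 →
          (Qs s).eval ((starRingEnd ℂ) w) = 0)) ∧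
      Tendsto r₁ (nhdsWithin 0 (Set.Ioi 0)) (nhds (-1)) ∧
      Tendsto r₂ (nhdsWithin 0 (Set.Ioi 0)) (nhds 1) ∧
      (∀ δ : ℝ, 0 < δ → ∃ s₂ > (0 : ℝ), ∀ s : ℝ, 0 < s → s < min s₁ s₂ →
        ∀ w : ℂ, (Qs s).eval w = 0 → w.im ≠ 0 → ‖w‖ < δ) := by
  obtain ⟨M, hM, haM⟩ : ∃ M > 0, ∀ i, |a i| ≤ M :=
    let ⟨M, hM⟩ := Finite.exists_le fun i => |a i|
    ⟨max M 1, by positivity, fun i => (hM i).trans (le_max_left _ _)⟩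
  obtain ⟨r₁, r₂, hr⟩ := exists_branchSum_mul_eq_one_set_eq_pair hε hsum hM haM
  have hQ (s : ℝ) (w : ℂ) : (Qs s).eval w = aeval w (branchPoly ε fun i => s * a i) := by
    rw [aeval_branchPoly, hQs]
    simp [branchPoly]
  refine ⟨1 / (2 * M), by positivity, r₁, r₂, fun s hs hs₁ => ?_,
    tendsto_nhdsGT_of_abs_sub_le (s₁ := 1 / (2 * M)) (by positivity) fun s hs hs₁ => by
      simpa using (hr s hs hs₁).2.1,
    tendsto_nhdsGT_of_abs_sub_le (s₁ := 1 / (2 * M)) (by positivity) fun s hs hs₁ =>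
      (hr s hs hs₁).2.2.1,
    fun δ hδ => ⟨δ / (3 * M), by positivity, fun s hs hs₂ w hw him => ?_⟩⟩
  · obtain ⟨hlt, -, -, hset⟩ := hr s hs hs₁
    refine ⟨hlt, hset, fun w hw him => ?_, fun w hw _ => by rw [hQ, aeval_conj, ← hQ, hw, map_zero]⟩
    have hinj : Function.Injective fun i => s * a i :=
      (mul_right_injective₀ hs.ne').comp ha.injective
    have hmem : w.re ∈ ({r₁ s, r₂ s} : Set ℝ) := hset ▸
      re_mem_of_aeval_branchPoly_eq_zero (fun j => (hε j).ne') hinj (hQ s w ▸ hw) him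
    rcases hmem with h | h
    · exact Or.inl (Complex.ext (by simpa using h) (by simp [him]))
    · exact Or.inr (Complex.ext (by simpa using h) (by simp [him]))
  · have hsM : s * M < δ / 3 := by
      have := lt_of_lt_of_le hs₂ (min_le_right _ _)
      rw [lt_div_iff₀ (by positivity)] at this
      linarith
    have hbound j : |s * a j| ≤ s * M := abs_mul_le_mul_of_abs_le hs.le (haM j)
    linarith [norm_lt_of_aeval_branchPoly_eq_zero hε hbound (hQ s w ▸ hw) him]

/-- small-time configuration. For `s` small, the branch-point equation
`∑_j ε_j/(z - s·a_j)² = 1` has exactly two real solutions, converging to `∓1` as `s → 0⁺`,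
while the remaining `2k - 2` roots of the branch-point polynomial `Q_s` are nonreal,
come in complex-conjugate pairs, and converge to `0`. -/
theorem stmt_8 (k : ℕ) (hk : 1 ≤ k) (a ε : Fin k → ℝ)
    (ha : StrictMono a) (hε : ∀ i, 0 < ε i) (hsum : ∑ i, ε i = 1)
    (Qs : ℝ → Polynomial ℂ)
    (hQs : ∀ s : ℝ, Qs s = ∏ i, (X - C ((s : ℂ) * (a i : ℂ))) ^ 2
        - ∑ i, C ((ε i : ℂ)) *
            ∏ j ∈ Finset.univ.erase i, (X - C ((s : ℂ) * (a j : ℂ))) ^ 2) :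
    ∃ s₁ > (0 : ℝ), ∃ r₁ r₂ : ℝ → ℝ,
      (∀ s : ℝ, 0 < s → s < s₁ →
        r₁ s < r₂ s ∧
        ({x : ℝ | (∀ j, x ≠ s * a j) ∧ ∑ j, ε j / (x - s * a j) ^ 2 = 1}
          = {r₁ s, r₂ s}) ∧
        (∀ w : ℂ, (Qs s).eval w = 0 → w.im = 0 → (w = (r₁ s : ℂ) ∨ w = (r₂ s : ℂ))) ∧
        (∀ w : ℂ, (Qs s).eval w = 0 → w.im ≠ 0 →
          (Qs s).eval ((starRingEnd ℂ) w) = 0)) ∧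
      Tendsto r₁ (nhdsWithin 0 (Set.Ioi 0)) (nhds (-1)) ∧
      Tendsto r₂ (nhdsWithin 0 (Set.Ioi 0)) (nhds 1) ∧
      (∀ δ : ℝ, 0 < δ → ∃ s₂ > (0 : ℝ), ∀ s : ℝ, 0 < s → s < min s₁ s₂ →
        ∀ w : ℂ, (Qs s).eval w = 0 → w.im ≠ 0 → ‖w‖ < δ) :=
  stmt_8_general k a ε ha hε hsum Qs hQs
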